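/- arXiv:1203.3210 — 5 statements merged into one kernel-verified Lean document; each statement's English description precedes it below -/
import Mathlib

section
/- Let K be a positive integer and let A_1, A_2, ..., A_K and B_1, B_2, ..., B_K be n×n real positive semidefinite matrices such that A_1 and B_1 are positive definite. Then Tr[ ∑_{k=1}^{K} (A_k − B_k) ( (∑_{l=1}^{k} B_l)^{−1} − (∑_{l=1}^{k} A_l)^{−1} ) ] ≥ 0. -/
open Finset Matrix
open scoped ComplexOrder

/-!
Let `S_k, T_k` be the partial sums of the `A_l` and `B_l`, `D_k = S_k - T_k`, and
`g_k = tr (D_k T_k⁻¹ D_k S_k⁻¹) ≥ 0`. By induction the `k`-th partial sum of the trace is at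
least `g_k / 2`. Since `T⁻¹ - S⁻¹ = T⁻¹ (S - T) S⁻¹`, the new term is
`tr ((D_{k+1} - D_k) T_{k+1}⁻¹ D_{k+1} S_{k+1}⁻¹)`. For `M, N ⪰ 0` the form
`(X, Y) ↦ tr (X M Y N)` is symmetric and positive semidefinite on symmetric matrices, so
`2 tr (X M Y N) ≤ tr (X M X N) + tr (Y M Y N)` bounds the cross term, and operator antitonicity
of inversion gives `tr (D_k T_{k+1}⁻¹ D_k S_{k+1}⁻¹) ≤ g_k`.
-/

namespace Matrix

lemma posDef_sum_of_mem {ι κ R : Type*} [Ring R] [PartialOrder R] [StarRing R] [AddLeftMono R]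
    {s : Finset κ} {C : κ → Matrix ι ι R} {i : κ} (hi : i ∈ s)
    (hCi : (C i).PosDef) (hC : ∀ j ∈ s, (C j).PosSemidef) : (∑ j ∈ s, C j).PosDef := by
  classical
  rw [← add_sum_erase s C hi]
  exact hCi.add_posSemidef <| posSemidef_sum _ fun j hj ↦ hC j (mem_of_mem_erase hj)

variable {ι : Type*} [Fintype ι]

lemma PosSemidef.trace_mul_nonneg {𝕜 : Type*} [RCLike 𝕜] {P Q : Matrix ι ι 𝕜}
    (hP : P.PosSemidef) (hQ : Q.PosSemidef) : 0 ≤ (P * Q).trace := by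
  classical
  open scoped MatrixOrder in
  obtain ⟨C, rfl⟩ := CStarAlgebra.nonneg_iff_eq_star_mul_self.mp hQ.nonneg
  rw [← Matrix.mul_assoc, trace_mul_comm, ← Matrix.mul_assoc, star_eq_conjTranspose]
  exact (hP.mul_mul_conjTranspose_same C).trace_nonneg

lemma trace_mul_mul_mul_nonneg {𝕜 : Type*} [RCLike 𝕜] {X M N : Matrix ι ι 𝕜}
    (hX : X.IsHermitian) (hM : M.PosSemidef) (hN : N.PosSemidef) :
    0 ≤ (X * M * X * N).trace := by
  have hXMX : (X * M * X).PosSemidef := by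
    simpa only [hX.eq] using hM.mul_mul_conjTranspose_same X
  exact hXMX.trace_mul_nonneg hN

lemma trace_mul_mul_mul_symm {X Y M N : Matrix ι ι ℝ} (hX : X.IsHermitian)
    (hY : Y.IsHermitian) (hM : M.IsHermitian) (hN : N.IsHermitian) :
    (X * M * Y * N).trace = (Y * M * X * N).trace := by
  rw [isHermitian_iff_isSymm] at hX hY hM hN
  rw [← trace_transpose, transpose_mul, transpose_mul, transpose_mul, hX.eq, hY.eq, hM.eq, hN.eq,
    trace_mul_comm, Matrix.mul_assoc, Matrix.mul_assoc, Matrix.mul_assoc, Matrix.mul_assoc]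

lemma two_mul_trace_mul_mul_mul_le {X Y M N : Matrix ι ι ℝ} (hX : X.IsHermitian)
    (hY : Y.IsHermitian) (hM : M.PosSemidef) (hN : N.PosSemidef) :
    2 * (X * M * Y * N).trace ≤ (X * M * X * N).trace + (Y * M * Y * N).trace := by
  have hsq := trace_mul_mul_mul_nonneg (hX.sub hY) hM hN
  have hsymm := trace_mul_mul_mul_symm hX hY hM.isHermitian hN.isHermitian
  simp only [Matrix.sub_mul, Matrix.mul_sub, trace_sub] at hsq
  linarith

lemma trace_mul_mul_mul_mono {X M M' N N' : Matrix ι ι ℝ} (hX : X.IsHermitian)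
    (hM : M.PosSemidef) (hN' : N'.PosSemidef) (hMM' : (M' - M).PosSemidef)
    (hNN' : (N' - N).PosSemidef) :
    (X * M * X * N).trace ≤ (X * M' * X * N').trace := by
  have h₁ := trace_mul_mul_mul_nonneg hX hMM' hN'
  have h₂ := trace_mul_mul_mul_nonneg hX hM hNN'
  simp only [Matrix.sub_mul, Matrix.mul_sub, trace_sub] at h₁ h₂
  linarith

variable [DecidableEq ι]

lemma PosDef.inv_sub_inv_posSemidef {𝕜 : Type*} [RCLike 𝕜] {M N : Matrix ι ι 𝕜}
    (hM : M.PosDef) (hMN : (N - M).PosSemidef) : (M⁻¹ - N⁻¹).PosSemidef := by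
  have hN : N.PosDef := by simpa using hM.add_posSemidef hMN
  set E := M⁻¹ - N⁻¹
  have hE : E.IsHermitian := hM.inv.isHermitian.sub hN.inv.isHermitian
  have key : E = E * M * E + N⁻¹ * (N - M) * N⁻¹ := by
    have hMd := (isUnit_iff_isUnit_det M).mp hM.isUnit
    have hNd := (isUnit_iff_isUnit_det N).mp hN.isUnit
    simp only [E, Matrix.sub_mul, Matrix.mul_sub, Matrix.mul_assoc, mul_nonsing_inv _ hMd,
      nonsing_inv_mul_cancel_left (h := hMd), nonsing_inv_mul_cancel_left (h := hNd),
      Matrix.mul_one]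
    abel
  rw [key]
  refine .add ?_ ?_
  · simpa only [hE.eq] using hM.posSemidef.mul_mul_conjTranspose_same E
  · simpa only [hN.inv.isHermitian.eq] using hMN.mul_mul_conjTranspose_same N⁻¹

noncomputable def tracePotential (S T : Matrix ι ι ℝ) : ℝ :=
  ((S - T) * T⁻¹ * (S - T) * S⁻¹).trace

lemma tracePotential_nonneg {S T : Matrix ι ι ℝ} (hS : S.PosSemidef) (hT : T.PosSemidef) :
    0 ≤ tracePotential S T :=
  trace_mul_mul_mul_nonneg (hS.isHermitian.sub hT.isHermitian) hT.inv hS.inv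

lemma tracePotential_sub_le {S T D : Matrix ι ι ℝ} (hS : S.PosDef) (hT : T.PosDef)
    (hD : D.IsHermitian) :
    tracePotential S T - (D * T⁻¹ * D * S⁻¹).trace ≤
      2 * ((S - T - D) * (T⁻¹ - S⁻¹)).trace := by
  have hcross := two_mul_trace_mul_mul_mul_le hD (hS.isHermitian.sub hT.isHermitian)
    hT.inv.posSemidef hS.inv.posSemidef
  rw [inv_sub_inv (iff_of_true hT.isUnit hS.isUnit), tracePotential]
  simp only [Matrix.sub_mul, Matrix.mul_assoc, trace_sub] at hcross ⊢
  linarith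

lemma trace_mul_inv_mul_mul_inv_le_tracePotential {S T S' T' : Matrix ι ι ℝ} (hS : S.PosDef)
    (hT : T.PosDef) (hSS' : (S' - S).PosSemidef) (hTT' : (T' - T).PosSemidef) :
    ((S - T) * T'⁻¹ * (S - T) * S'⁻¹).trace ≤ tracePotential S T := by
  have hT' : T'.PosDef := by simpa using hT.add_posSemidef hTT'
  exact trace_mul_mul_mul_mono (hS.isHermitian.sub hT.isHermitian)
    hT'.inv.posSemidef hS.inv.posSemidef
    (hT.inv_sub_inv_posSemidef hTT') (hS.inv_sub_inv_posSemidef hSS')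

end Matrix

lemma tracePotential_partialSums_div_two_le {ι : Type*} [Fintype ι] [DecidableEq ι]
    (A B : ℕ → Matrix ι ι ℝ) (hA1 : (A 1).PosDef) (hB1 : (B 1).PosDef) (m : ℕ)
    (hA : ∀ k ∈ Icc 1 m, (A k).PosSemidef) (hB : ∀ k ∈ Icc 1 m, (B k).PosSemidef) :
    tracePotential (∑ l ∈ Icc 1 m, A l) (∑ l ∈ Icc 1 m, B l) / 2 ≤
      (∑ k ∈ Icc 1 m, (A k - B k) *
        ((∑ l ∈ Icc 1 k, B l)⁻¹ - (∑ l ∈ Icc 1 k, A l)⁻¹)).trace := by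
  induction m with
  | zero => simp [tracePotential]
  | succ m ih =>
    have hsub : Icc 1 m ⊆ Icc 1 (m + 1) := Icc_subset_Icc_right m.le_succ
    have hA' : ∀ k ∈ Icc 1 m, (A k).PosSemidef := fun k hk ↦ hA k (hsub hk)
    have hB' : ∀ k ∈ Icc 1 m, (B k).PosSemidef := fun k hk ↦ hB k (hsub hk)
    have hlast : m + 1 ∈ Icc 1 (m + 1) := by simp
    have hS' := posDef_sum_of_mem (by simp) hA1 hA
    have hT' := posDef_sum_of_mem (by simp) hB1 hB
    simp only [sum_Icc_succ_top (Nat.le_add_left 1 m)] at hS' hT' ⊢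
    set S := ∑ l ∈ Icc 1 m, A l
    set T := ∑ l ∈ Icc 1 m, B l
    have hq : ((S - T) * (T + B (m + 1))⁻¹ * (S - T) * (S + A (m + 1))⁻¹).trace ≤
        tracePotential S T := by
      rcases m.eq_zero_or_pos with rfl | hm
      · simp [S, T, tracePotential]
      · have hmem : 1 ∈ Icc 1 m := mem_Icc.mpr ⟨le_rfl, hm⟩
        exact trace_mul_inv_mul_mul_inv_le_tracePotential (posDef_sum_of_mem hmem hA1 hA')
          (posDef_sum_of_mem hmem hB1 hB') (by simpa using hA _ hlast) (by simpa using hB _ hlast)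
    have hstep := tracePotential_sub_le hS' hT'
      ((posSemidef_sum _ hA').isHermitian.sub (posSemidef_sum _ hB').isHermitian)
    rw [show S + A (m + 1) - (T + B (m + 1)) - (S - T) = A (m + 1) - B (m + 1) by abel] at hstep
    rw [trace_add]
    linarith [ih hA' hB']

theorem trace_ineq_nonneg_general (n K : ℕ)
    (A B : ℕ → Matrix (Fin n) (Fin n) ℝ)
    (hA : ∀ k ∈ Finset.Icc 1 K, (A k).PosSemidef)
    (hB : ∀ k ∈ Finset.Icc 1 K, (B k).PosSemidef)
    (hA1 : (A 1).PosDef) (hB1 : (B 1).PosDef) :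
    0 ≤ Matrix.trace (∑ k ∈ Finset.Icc 1 K,
      (A k - B k) *
        ((∑ l ∈ Finset.Icc 1 k, B l)⁻¹ - (∑ l ∈ Finset.Icc 1 k, A l)⁻¹)) :=
by
  have hpot := tracePotential_nonneg (posSemidef_sum _ hA) (posSemidef_sum _ hB)
  linarith [tracePotential_partialSums_div_two_le A B hA1 hB1 K hA hB]

/-- Trace inequality of Belmega et al.: for positive semidefinite `A₁,…,A_K`,
`B₁,…,B_K` with `A₁, B₁` positive definite,
`Tr[∑ₖ (Aₖ − Bₖ)((∑_{l≤k} B_l)⁻¹ − (∑_{l≤k} A_l)⁻¹)] ≥ 0`. -/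
theorem trace_ineq_nonneg (n K : ℕ) (hK : 0 < K)
    (A B : ℕ → Matrix (Fin n) (Fin n) ℝ)
    (hA : ∀ k ∈ Finset.Icc 1 K, (A k).PosSemidef)
    (hB : ∀ k ∈ Finset.Icc 1 K, (B k).PosSemidef)
    (hA1 : (A 1).PosDef) (hB1 : (B 1).PosDef) :
    0 ≤ Matrix.trace (∑ k ∈ Finset.Icc 1 K,
      (A k - B k) *
        ((∑ l ∈ Finset.Icc 1 k, B l)⁻¹ - (∑ l ∈ Finset.Icc 1 k, A l)⁻¹)) :=
  trace_ineq_nonneg_general n K A B hA hB hA1 hB1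
end

section
/- Let K be a positive integer and let A_1, ..., A_K and B_1, ..., B_K be n×n real positive semidefinite matrices such that A_1 and B_1 are positive definite. If the tuples (A_1, ..., A_K) and (B_1, ..., B_K) are not identical (i.e., A_k ≠ B_k for some k), then Tr[ ∑_{k=1}^{K} (A_k − B_k) ( (∑_{l=1}^{k} B_l)^{−1} − (∑_{l=1}^{k} A_l)^{−1} ) ] > 0. -/
/-!
Write `Sₖ`, `Tₖ` for the partial sums of the `Aₗ`, `Bₗ` and `Dₖ = Sₖ - Tₖ`, so that
`Aₖ - Bₖ = Dₖ - Dₖ₋₁` and `Tₖ⁻¹ - Sₖ⁻¹ = Tₖ⁻¹ Dₖ Sₖ⁻¹`. Polarization for symmetric matrices gives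
`2 Tr[(Aₖ - Bₖ)(Tₖ⁻¹ - Sₖ⁻¹)] = Φₖ - Tr[Dₖ₋₁ Tₖ⁻¹ Dₖ₋₁ Sₖ⁻¹] + Tr[(Aₖ - Bₖ) Tₖ⁻¹ (Aₖ - Bₖ) Sₖ⁻¹]`
with `Φₖ = Tr[Dₖ Tₖ⁻¹ Dₖ Sₖ⁻¹] ≥ 0`. Since inversion is operator antitone and `Sₖ₋₁ ≤ Sₖ`,
`Tₖ₋₁ ≤ Tₖ`, the middle term is at most `Φₖ₋₁`; the last term is nonnegative, and positive
when `Aₖ ≠ Bₖ`. Summing over `k`, twice the trace in question exceeds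
`∑ₖ (Φₖ - Φₖ₋₁) = Φ_K ≥ 0`, as `D₀ = 0`.
-/

open Finset Matrix

open scoped MatrixOrder ComplexOrder

theorem Finset.sum_Icc_one_sub {M : Type*} [AddCommGroup M] (f : ℕ → M) (K : ℕ) :
    ∑ k ∈ Icc 1 K, (f k - f (k - 1)) = f K - f 0 := by
  induction K with
  | zero => simp
  | succ K ih =>
    rw [sum_Icc_succ_top (by omega), ih, Nat.add_sub_cancel]
    abel

section PartialSum

variable {M : Type*} [AddCommMonoid M]

def partialSum (A : ℕ → M) (k : ℕ) : M := ∑ l ∈ Icc 1 k, A l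

theorem partialSum_zero (A : ℕ → M) : partialSum A 0 = 0 := by
  simp [partialSum]

theorem partialSum_succ (A : ℕ → M) (k : ℕ) :
    partialSum A (k + 1) = partialSum A k + A (k + 1) :=
  sum_Icc_succ_top (by omega) A

end PartialSum

namespace Matrix

section RCLike

variable {n 𝕜 : Type*} [RCLike 𝕜]

theorem PosDef.sum_of_mem {ι : Type*} {s : Finset ι} {A : ι → Matrix n n 𝕜} {i : ι}
    (hi : i ∈ s) (hAi : (A i).PosDef) (hA : ∀ j ∈ s, (A j).PosSemidef) :
    (∑ j ∈ s, A j).PosDef := by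
  classical
  rw [← add_sum_erase s A hi]
  exact hAi.add_posSemidef (posSemidef_sum _ fun j hj => hA j (mem_of_mem_erase hj))

theorem posSemidef_partialSum {A : ℕ → Matrix n n 𝕜} {K k : ℕ}
    (hA : ∀ l ∈ Icc 1 K, (A l).PosSemidef) (hk : k ≤ K) : (partialSum A k).PosSemidef :=
  posSemidef_sum _ fun l hl => hA l (Icc_subset_Icc_right hk hl)

theorem posDef_partialSum {A : ℕ → Matrix n n 𝕜} {K k : ℕ}
    (hA : ∀ l ∈ Icc 1 K, (A l).PosSemidef) (hA1 : (A 1).PosDef) (hk : k ∈ Icc 1 K) :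
    (partialSum A k).PosDef :=
  PosDef.sum_of_mem (left_mem_Icc.mpr (mem_Icc.mp hk).1) hA1
    fun l hl => hA l (Icc_subset_Icc_right (mem_Icc.mp hk).2 hl)

variable [Fintype n]

theorem trace_mul_mul_conjTranspose_mul_eq (X C D : Matrix n n 𝕜) :
    (X * (Dᴴ * D) * Xᴴ * (Cᴴ * C)).trace = (C * X * Dᴴ * (C * X * Dᴴ)ᴴ).trace := by
  simp only [conjTranspose_mul, conjTranspose_conjTranspose, ← Matrix.mul_assoc]
  rw [trace_mul_comm _ C]
  simp only [Matrix.mul_assoc]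

variable [DecidableEq n]

theorem trace_mul_mul_conjTranspose_mul_nonneg {Q P : Matrix n n 𝕜} (hQ : Q.PosSemidef)
    (hP : P.PosSemidef) (X : Matrix n n 𝕜) : 0 ≤ (X * Q * Xᴴ * P).trace := by
  obtain ⟨C, rfl⟩ := CStarAlgebra.nonneg_iff_eq_star_mul_self.mp hP.nonneg
  obtain ⟨D, rfl⟩ := CStarAlgebra.nonneg_iff_eq_star_mul_self.mp hQ.nonneg
  rw [star_eq_conjTranspose, star_eq_conjTranspose, trace_mul_mul_conjTranspose_mul_eq]
  exact (posSemidef_self_mul_conjTranspose _).trace_nonneg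

theorem trace_mul_mul_conjTranspose_mul_pos {Q P : Matrix n n 𝕜} (hQ : Q.PosDef)
    (hP : P.PosDef) {X : Matrix n n 𝕜} (hX : X ≠ 0) : 0 < (X * Q * Xᴴ * P).trace := by
  obtain ⟨C, hC, rfl⟩ :=
    CStarAlgebra.isStrictlyPositive_iff_eq_star_mul_self.mp hP.isStrictlyPositive
  obtain ⟨D, hD, rfl⟩ :=
    CStarAlgebra.isStrictlyPositive_iff_eq_star_mul_self.mp hQ.isStrictlyPositive
  rw [star_eq_conjTranspose, star_eq_conjTranspose, trace_mul_mul_conjTranspose_mul_eq]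
  refine (posSemidef_self_mul_conjTranspose _).trace_nonneg.lt_of_ne' ?_
  rwa [Ne, trace_mul_conjTranspose_self_eq_zero_iff, ← star_eq_conjTranspose,
    hD.star.mul_left_eq_zero, hC.mul_right_eq_zero]

theorem trace_mul_mul_conjTranspose_mul_mono {Q Q' P P' : Matrix n n 𝕜} (hQ : 0 ≤ Q)
    (hP : 0 ≤ P) (hQQ' : Q ≤ Q') (hPP' : P ≤ P') (X : Matrix n n 𝕜) :
    (X * Q * Xᴴ * P).trace ≤ (X * Q' * Xᴴ * P').trace := by
  have hQ' : 0 ≤ (X * (Q' - Q) * Xᴴ * P).trace :=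
    trace_mul_mul_conjTranspose_mul_nonneg hQQ' hP.posSemidef X
  have hP' : 0 ≤ (X * Q' * Xᴴ * (P' - P)).trace :=
    trace_mul_mul_conjTranspose_mul_nonneg (hQ.trans hQQ').posSemidef hPP' X
  simp only [Matrix.mul_sub, Matrix.sub_mul, trace_sub, sub_nonneg] at hQ' hP'
  exact hQ'.trans hP'

theorem PosDef.inv_le_inv {S T : Matrix n n 𝕜} (hS : S.PosDef) (hT : T.PosDef)
    (hST : S ≤ T) : T⁻¹ ≤ S⁻¹ := by
  rw [le_iff] at hST ⊢
  have hSu : IsUnit S.det := (isUnit_iff_isUnit_det S).mp hS.isUnit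
  have hTu : IsUnit T.det := (isUnit_iff_isUnit_det T).mp hT.isUnit
  have key : S⁻¹ - T⁻¹ =
      (T⁻¹ * (T - S)) * S⁻¹ * (T⁻¹ * (T - S))ᴴ + T⁻¹ * (T - S) * T⁻¹ᴴ := by
    rw [hT.inv.isHermitian.eq, conjTranspose_mul, hST.isHermitian.eq, hT.inv.isHermitian.eq,
      inv_sub_inv (by simp [hS.isUnit, hT.isUnit])]
    simp only [Matrix.mul_sub, Matrix.sub_mul, Matrix.mul_assoc, mul_nonsing_inv _ hSu,
      mul_nonsing_inv _ hTu, nonsing_inv_mul_cancel_left (A := S) _ hSu,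
      nonsing_inv_mul_cancel_left (A := T) _ hTu, Matrix.mul_one]
    abel
  rw [key]
  exact (hS.inv.posSemidef.mul_mul_conjTranspose_same _).add (hST.mul_mul_conjTranspose_same _)

end RCLike

section Real

variable {n : Type*} [Fintype n]

theorem trace_mul_mul_mul_comm_of_isHermitian {X Y Q P : Matrix n n ℝ} (hX : X.IsHermitian)
    (hY : Y.IsHermitian) (hQ : Q.IsHermitian) (hP : P.IsHermitian) :
    (Y * Q * X * P).trace = (X * Q * Y * P).trace := by
  rw [← trace_transpose, ← conjTranspose_eq_transpose_of_trivial]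
  simp only [conjTranspose_mul, hX.eq, hY.eq, hQ.eq, hP.eq, Matrix.mul_assoc]
  rw [trace_mul_comm P]
  simp only [Matrix.mul_assoc]

theorem two_mul_trace_sub_mul_mul_mul {X Y Q P : Matrix n n ℝ} (hX : X.IsHermitian)
    (hY : Y.IsHermitian) (hQ : Q.IsHermitian) (hP : P.IsHermitian) :
    2 * ((X - Y) * Q * X * P).trace = (X * Q * X * P).trace - (Y * Q * Y * P).trace +
      ((X - Y) * Q * (X - Y) * P).trace := by
  have hsymm := trace_mul_mul_mul_comm_of_isHermitian hX hY hQ hP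
  simp only [Matrix.sub_mul, Matrix.mul_sub, trace_sub] at hsymm ⊢
  linarith

variable [DecidableEq n]

noncomputable def inversePotential (S T : Matrix n n ℝ) : ℝ := ((S - T) * T⁻¹ * (S - T) * S⁻¹).trace

theorem inversePotential_zero : inversePotential (0 : Matrix n n ℝ) 0 = 0 := by
  simp [inversePotential]

theorem inversePotential_nonneg {S T : Matrix n n ℝ} (hS : S.PosSemidef) (hT : T.PosSemidef) :
    0 ≤ inversePotential S T := by
  have h := trace_mul_mul_conjTranspose_mul_nonneg hT.inv hS.inv (S - T)
  rwa [(hS.isHermitian.sub hT.isHermitian).eq] at h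

theorem trace_mul_inv_mul_inv_le_inversePotential {S₀ T₀ S T : Matrix n n ℝ}
    (hS₀ : S₀.PosDef) (hT₀ : T₀.PosDef) (hS : S₀ ≤ S) (hT : T₀ ≤ T) :
    ((S₀ - T₀) * T⁻¹ * (S₀ - T₀) * S⁻¹).trace ≤ inversePotential S₀ T₀ := by
  have hS' : S.PosDef := by simpa using hS₀.add_posSemidef hS
  have hT' : T.PosDef := by simpa using hT₀.add_posSemidef hT
  have h := trace_mul_mul_conjTranspose_mul_mono hT'.inv.posSemidef.nonneg
    hS'.inv.posSemidef.nonneg (hT₀.inv_le_inv hT' hT) (hS₀.inv_le_inv hS' hS) (S₀ - T₀)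
  rwa [(hS₀.isHermitian.sub hT₀.isHermitian).eq] at h

theorem two_mul_trace_sub_mul_inv_sub_inv {S₀ T₀ A B : Matrix n n ℝ} (hS₀ : S₀.IsHermitian)
    (hT₀ : T₀.IsHermitian) (hS : (S₀ + A).PosDef) (hT : (T₀ + B).PosDef) :
    2 * ((A - B) * ((T₀ + B)⁻¹ - (S₀ + A)⁻¹)).trace =
      inversePotential (S₀ + A) (T₀ + B) -
        ((S₀ - T₀) * (T₀ + B)⁻¹ * (S₀ - T₀) * (S₀ + A)⁻¹).trace +
        ((A - B) * (T₀ + B)⁻¹ * (A - B) * (S₀ + A)⁻¹).trace := by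
  have hAB : A - B = (S₀ + A - (T₀ + B)) - (S₀ - T₀) := by abel
  rw [inv_sub_inv (by simp [hS.isUnit, hT.isUnit]), ← Matrix.mul_assoc, ← Matrix.mul_assoc,
    inversePotential, hAB,
    two_mul_trace_sub_mul_mul_mul (hS.isHermitian.sub hT.isHermitian) (hS₀.sub hT₀)
      hT.inv.isHermitian hS.inv.isHermitian]

section Sequences

variable {A B : ℕ → Matrix n n ℝ} {K k : ℕ}

theorem inversePotential_sub_add_le (hA : ∀ l ∈ Icc 1 K, (A l).PosSemidef)
    (hB : ∀ l ∈ Icc 1 K, (B l).PosSemidef) (hA1 : (A 1).PosDef) (hB1 : (B 1).PosDef)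
    (hk : k ∈ Icc 1 K) :
    inversePotential (partialSum A k) (partialSum B k) -
        inversePotential (partialSum A (k - 1)) (partialSum B (k - 1)) +
        ((A k - B k) * (partialSum B k)⁻¹ * (A k - B k) * (partialSum A k)⁻¹).trace ≤
      2 * ((A k - B k) * ((partialSum B k)⁻¹ - (partialSum A k)⁻¹)).trace := by
  obtain ⟨j, rfl⟩ : ∃ j, k = j + 1 := ⟨k - 1, by grind⟩
  have hjK : j ≤ K := by grind
  have hS := posDef_partialSum hA hA1 hk
  have hT := posDef_partialSum hB hB1 hk
  rw [Nat.add_sub_cancel]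
  simp only [partialSum_succ] at hS hT ⊢
  rw [two_mul_trace_sub_mul_inv_sub_inv (posSemidef_partialSum hA hjK).isHermitian
    (posSemidef_partialSum hB hjK).isHermitian hS hT]
  suffices ((partialSum A j - partialSum B j) * (partialSum B j + B (j + 1))⁻¹ *
      (partialSum A j - partialSum B j) * (partialSum A j + A (j + 1))⁻¹).trace ≤
      inversePotential (partialSum A j) (partialSum B j) by linarith
  rcases j.eq_zero_or_pos with rfl | hj
  · simp [partialSum_zero, inversePotential]
  · exact trace_mul_inv_mul_inv_le_inversePotential
      (posDef_partialSum hA hA1 (by grind)) (posDef_partialSum hB hB1 (by grind))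
      (le_add_of_nonneg_right (hA _ hk).nonneg) (le_add_of_nonneg_right (hB _ hk).nonneg)

theorem inversePotential_sub_le (hA : ∀ l ∈ Icc 1 K, (A l).PosSemidef)
    (hB : ∀ l ∈ Icc 1 K, (B l).PosSemidef) (hA1 : (A 1).PosDef) (hB1 : (B 1).PosDef)
    (hk : k ∈ Icc 1 K) :
    inversePotential (partialSum A k) (partialSum B k) -
        inversePotential (partialSum A (k - 1)) (partialSum B (k - 1)) ≤
      2 * ((A k - B k) * ((partialSum B k)⁻¹ - (partialSum A k)⁻¹)).trace := by
  have h := trace_mul_mul_conjTranspose_mul_nonneg (posDef_partialSum hB hB1 hk).inv.posSemidef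
    (posDef_partialSum hA hA1 hk).inv.posSemidef (A k - B k)
  rw [((hA k hk).isHermitian.sub (hB k hk).isHermitian).eq] at h
  linarith [inversePotential_sub_add_le hA hB hA1 hB1 hk]

theorem inversePotential_sub_lt (hA : ∀ l ∈ Icc 1 K, (A l).PosSemidef)
    (hB : ∀ l ∈ Icc 1 K, (B l).PosSemidef) (hA1 : (A 1).PosDef) (hB1 : (B 1).PosDef)
    (hk : k ∈ Icc 1 K) (hAB : A k ≠ B k) :
    inversePotential (partialSum A k) (partialSum B k) -
        inversePotential (partialSum A (k - 1)) (partialSum B (k - 1)) <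
      2 * ((A k - B k) * ((partialSum B k)⁻¹ - (partialSum A k)⁻¹)).trace := by
  have h := trace_mul_mul_conjTranspose_mul_pos (posDef_partialSum hB hB1 hk).inv
    (posDef_partialSum hA hA1 hk).inv (sub_ne_zero.mpr hAB)
  rw [((hA k hk).isHermitian.sub (hB k hk).isHermitian).eq] at h
  linarith [inversePotential_sub_add_le hA hB hA1 hB1 hk]

end Sequences

end Real

end Matrix

theorem trace_ineq_pos_general (n K : ℕ)
    (A B : ℕ → Matrix (Fin n) (Fin n) ℝ)
    (hA : ∀ k ∈ Finset.Icc 1 K, (A k).PosSemidef)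
    (hB : ∀ k ∈ Finset.Icc 1 K, (B k).PosSemidef)
    (hA1 : (A 1).PosDef) (hB1 : (B 1).PosDef)
    (hne : ∃ k ∈ Finset.Icc 1 K, A k ≠ B k) :
    0 < Matrix.trace (∑ k ∈ Finset.Icc 1 K,
      (A k - B k) *
        ((∑ l ∈ Finset.Icc 1 k, B l)⁻¹ - (∑ l ∈ Finset.Icc 1 k, A l)⁻¹)) := by
  obtain ⟨k₀, hk₀, hAB⟩ := hne
  have hsum := sum_lt_sum (fun k hk => inversePotential_sub_le hA hB hA1 hB1 hk)
    ⟨k₀, hk₀, inversePotential_sub_lt hA hB hA1 hB1 hk₀ hAB⟩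
  rw [sum_Icc_one_sub (fun k => inversePotential (partialSum A k) (partialSum B k)),
    partialSum_zero, partialSum_zero, inversePotential_zero, ← mul_sum, ← trace_sum] at hsum
  have hpot : 0 ≤ inversePotential (partialSum A K) (partialSum B K) :=
    inversePotential_nonneg (posSemidef_partialSum hA le_rfl) (posSemidef_partialSum hB le_rfl)
  unfold partialSum at hsum hpot
  linarith

/-- Strict version of the trace inequality: if the tuples `(A₁,…,A_K)` and
`(B₁,…,B_K)` are not identical, then
`Tr[∑ₖ (Aₖ − Bₖ)((∑_{l≤k} B_l)⁻¹ − (∑_{l≤k} A_l)⁻¹)] > 0`. -/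
theorem trace_ineq_pos (n K : ℕ) (hK : 0 < K)
    (A B : ℕ → Matrix (Fin n) (Fin n) ℝ)
    (hA : ∀ k ∈ Finset.Icc 1 K, (A k).PosSemidef)
    (hB : ∀ k ∈ Finset.Icc 1 K, (B k).PosSemidef)
    (hA1 : (A 1).PosDef) (hB1 : (B 1).PosDef)
    (hne : ∃ k ∈ Finset.Icc 1 K, A k ≠ B k) :
    0 < Matrix.trace (∑ k ∈ Finset.Icc 1 K,
      (A k - B k) *
        ((∑ l ∈ Finset.Icc 1 k, B l)⁻¹ - (∑ l ∈ Finset.Icc 1 k, A l)⁻¹)) :=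
  trace_ineq_pos_general n K A B hA hB hA1 hB1 hne
end

section
/- Let A and B be n×n real positive definite matrices with A ≠ B. Then Tr[ (A − B)(B^{−1} − A^{−1}) ] > 0. -/
/-!
By `B⁻¹ - A⁻¹ = B⁻¹ (A - B) A⁻¹` the trace is `Tr (C P C Q)` with `C = A - B` Hermitian and
nonzero and `P = B⁻¹`, `Q = A⁻¹` positive definite. Factoring `P = Rᴴ R` and `Q = Sᴴ S` with
`R`, `S` invertible (square roots), it becomes `Tr (Xᴴ X)` for `X = R C Sᴴ ≠ 0`, the squared
Frobenius norm of `X`.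
-/

open Matrix

open scoped ComplexOrder MatrixOrder

namespace Matrix

variable {n 𝕜 : Type*} [Fintype n] [DecidableEq n] [RCLike 𝕜]

theorem PosDef.exists_isUnit_eq_conjTranspose_mul_self {P : Matrix n n 𝕜} (hP : P.PosDef) :
    ∃ R : Matrix n n 𝕜, IsUnit R ∧ P = Rᴴ * R := by
  refine ⟨CFC.sqrt P, CFC.isUnit_sqrt_iff_isStrictlyPositive.mpr
    (isStrictlyPositive_iff_posDef.mpr hP), ?_⟩
  rw [(CFC.sqrt_nonneg P).posSemidef.isHermitian.eq, CFC.sqrt_mul_sqrt_self P hP.posSemidef.nonneg]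

theorem trace_mul_posDef_mul_posDef_pos {C P Q : Matrix n n 𝕜} (hC : C.IsHermitian) (hC0 : C ≠ 0)
    (hP : P.PosDef) (hQ : Q.PosDef) : 0 < (C * P * C * Q).trace := by
  obtain ⟨R, hR, rfl⟩ := hP.exists_isUnit_eq_conjTranspose_mul_self
  obtain ⟨S, hS, rfl⟩ := hQ.exists_isUnit_eq_conjTranspose_mul_self
  have hX : R * C * Sᴴ ≠ 0 := by
    rwa [Ne, ((isUnit_conjTranspose S).mpr hS).mul_left_eq_zero, hR.mul_right_eq_zero]
  set X := R * C * Sᴴ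
  have htrace : (C * (Rᴴ * R) * C * (Sᴴ * S)).trace = (Xᴴ * X).trace := by
    rw [show C * (Rᴴ * R) * C * (Sᴴ * S) = C * (Rᴴ * R) * C * Sᴴ * S by
      simp only [Matrix.mul_assoc], trace_mul_comm]
    simp only [X, conjTranspose_mul, conjTranspose_conjTranspose, hC.eq, Matrix.mul_assoc]
  rw [htrace]
  exact (posSemidef_conjTranspose_mul_self X).trace_nonneg.lt_of_ne
    (Ne.symm (trace_conjTranspose_mul_self_eq_zero_iff.not.mpr hX))

end Matrix

/-- For distinct positive definite matrices `A`, `B`: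
`Tr[(A − B)(B⁻¹ − A⁻¹)] > 0`. -/
theorem trace_two_posdef_pos (n : ℕ) (A B : Matrix (Fin n) (Fin n) ℝ)
    (hA : A.PosDef) (hB : B.PosDef) (hne : A ≠ B) :
    0 < Matrix.trace ((A - B) * (B⁻¹ - A⁻¹)) := by
  rw [inv_sub_inv (iff_of_true hB.isUnit hA.isUnit), ← Matrix.mul_assoc, ← Matrix.mul_assoc]
  exact trace_mul_posDef_mul_posDef_pos (hA.isHermitian.sub hB.isHermitian) (sub_ne_zero.mpr hne)
    hB.inv hA.inv
end

section
/- Let K be a positive integer, let N_1, ..., N_K be n×n real symmetric matrices with N_1 positive definite and N_k − N_{k−1} positive semidefinite for k = 2, ..., K (degradedness), and let Q̃_1, ..., Q̃_K and Q̂_1, ..., Q̂_K be n×n real positive semidefinite matrices. If r_1 ≥ r_2 ≥ ... ≥ r_K > 0 are real numbers, then Tr[ ∑_{k=1}^{K} r_k (Q̂_k − Q̃_k) ( (N_k + ∑_{i=1}^{k} Q̃_i)^{−1} − (N_k + ∑_{i=1}^{k} Q̂_i)^{−1} ) ] ≥ 0. -/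
open Finset Matrix
open scoped MatrixOrder ComplexOrder

/-!
Write `A k = N k + ∑_{i ≤ k} Q̃ i`, `B k = N k + ∑_{i ≤ k} Q̂ i`, `S k = B k - A k` and
`g k = tr (S k (A k⁻¹ - B k⁻¹)) = tr (S k A k⁻¹ S k B k⁻¹) ≥ 0`. Expanding
`S k = S (k - 1) + (Q̂ k - Q̃ k)` and using that inversion is operator antitone (degradedness gives
`A (k - 1) ≤ A k` and `B (k - 1) ≤ B k`) yields
`g k - g (k - 1) ≤ 2 tr ((Q̂ k - Q̃ k) (A k⁻¹ - B k⁻¹))`.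
Summation by parts against the nonincreasing positive weights `r k` then bounds twice the DSC
quantity below by `r K * g K ≥ 0`.
-/

namespace Matrix

theorem inv_sub_inv_eq {m R : Type*} [Fintype m] [DecidableEq m] [CommRing R]
    {A B : Matrix m m R} (hA : IsUnit A) (hB : IsUnit B) :
    A⁻¹ - B⁻¹ = A⁻¹ * (B - A) * B⁻¹ := by
  rw [mul_sub, sub_mul, nonsing_inv_mul _ ((isUnit_iff_isUnit_det A).1 hA), one_mul, mul_assoc,
    mul_nonsing_inv _ ((isUnit_iff_isUnit_det B).1 hB), mul_one]

section RCLike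

variable {m 𝕜 : Type*} [RCLike 𝕜]

theorem PosDef.of_le {A B : Matrix m m 𝕜} (hA : A.PosDef) (hAB : A ≤ B) : B.PosDef := by
  simpa using hA.add_posSemidef (le_iff.1 hAB)

variable [Fintype m] [DecidableEq m]

theorem trace_mul_nonneg {A B : Matrix m m 𝕜} (hA : 0 ≤ A) (hB : 0 ≤ B) :
    0 ≤ (A * B).trace := by
  have hconj : 0 ≤ CFC.sqrt A * B * CFC.sqrt A :=
    (CFC.sqrt_nonneg A).isSelfAdjoint.conjugate_nonneg hB
  calc 0 ≤ (CFC.sqrt A * B * CFC.sqrt A).trace := hconj.posSemidef.trace_nonneg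
    _ = (A * B).trace := by rw [trace_mul_cycle, CFC.sqrt_mul_sqrt_self A hA]

theorem trace_mul_le_trace_mul {P P' Y Y' : Matrix m m 𝕜} (hPP' : P ≤ P') (hP' : 0 ≤ P')
    (hY : 0 ≤ Y) (hYY' : Y ≤ Y') : (P * Y).trace ≤ (P' * Y').trace := by
  have h₁ := trace_mul_nonneg (sub_nonneg.2 hPP') hY
  have h₂ := trace_mul_nonneg hP' (sub_nonneg.2 hYY')
  rw [sub_mul, trace_sub, sub_nonneg] at h₁
  rw [mul_sub, trace_sub, sub_nonneg] at h₂
  exact h₁.trans h₂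

/-- The block matrix `[[B, 1], [1, A⁻¹]]` has Schur complements `A⁻¹ - B⁻¹` and `B - A`. -/
theorem PosDef.inv_anti {A B : Matrix m m 𝕜} (hA : A.PosDef) (hAB : A ≤ B) : B⁻¹ ≤ A⁻¹ := by
  have hB := hA.of_le hAB
  let := hB.isUnit.invertible
  let := hA.isUnit.invertible
  let := hA.inv.isUnit.invertible
  have h := (hA.inv.fromBlocks₂₂ B (1 : Matrix m m 𝕜)).2
    (by simpa [inv_inv_of_invertible] using le_iff.1 hAB)
  simpa [le_iff] using (hB.fromBlocks₁₁ 1 A⁻¹).1 (by simpa using h)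

end RCLike

variable {m : Type*} [Fintype m]

theorem trace_mul_mul_mul_comm {S T X Y : Matrix m m ℝ} (hS : S.IsHermitian)
    (hT : T.IsHermitian) (hX : X.IsHermitian) (hY : Y.IsHermitian) :
    (S * X * T * Y).trace = (T * X * S * Y).trace := by
  calc (S * X * T * Y).trace = (S * X * T * Y)ᴴ.trace := by rw [trace_conjTranspose, star_trivial]
    _ = (Y * (T * X * S)).trace := by
      simp only [conjTranspose_mul, hS.eq, hT.eq, hX.eq, hY.eq, Matrix.mul_assoc]
    _ = (T * X * S * Y).trace := trace_mul_comm _ _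

variable [DecidableEq m]

theorem trace_mul_mul_mul_self_nonneg {S X Y : Matrix m m ℝ} (hS : S.IsHermitian) (hX : 0 ≤ X)
    (hY : 0 ≤ Y) : 0 ≤ (S * X * S * Y).trace :=
  trace_mul_nonneg (hS.isSelfAdjoint.conjugate_nonneg hX) hY

noncomputable def invGap (A B : Matrix m m ℝ) : ℝ := ((B - A) * (A⁻¹ - B⁻¹)).trace

@[simp]
theorem invGap_self (A : Matrix m m ℝ) : invGap A A = 0 := by
  simp [invGap]

theorem invGap_eq {A B : Matrix m m ℝ} (hA : A.PosDef) (hB : B.PosDef) :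
    invGap A B = ((B - A) * A⁻¹ * (B - A) * B⁻¹).trace := by
  rw [invGap, inv_sub_inv_eq hA.isUnit hB.isUnit]
  simp only [Matrix.mul_assoc]

theorem invGap_nonneg {A B : Matrix m m ℝ} (hA : A.PosDef) (hB : B.PosDef) : 0 ≤ invGap A B := by
  rw [invGap_eq hA hB]
  exact trace_mul_mul_mul_self_nonneg (hB.isHermitian.sub hA.isHermitian) hA.inv.posSemidef.nonneg
    hB.inv.posSemidef.nonneg

theorem invGap_sub_invGap_le {A B A' B' D : Matrix m m ℝ} (hA : A.PosDef) (hB : B.PosDef)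
    (hAA' : A ≤ A') (hBB' : B ≤ B') (hD : D.IsHermitian) (hdiff : B' - A' = B - A + D) :
    invGap A' B' - invGap A B ≤ 2 * (D * (A'⁻¹ - B'⁻¹)).trace := by
  have hA' := hA.of_le hAA'
  have hB' := hB.of_le hBB'
  set S := B - A
  set X := A'⁻¹
  set Y := B'⁻¹
  have hS : S.IsHermitian := hB.isHermitian.sub hA.isHermitian
  have hX : 0 ≤ X := hA'.inv.posSemidef.nonneg
  have hY : 0 ≤ Y := hB'.inv.posSemidef.nonneg
  have hmono : (S * X * S * Y).trace ≤ invGap A B := by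
    rw [invGap_eq hA hB]
    exact trace_mul_le_trace_mul (hS.isSelfAdjoint.conjugate_le_conjugate (hA.inv_anti hAA'))
      (hS.isSelfAdjoint.conjugate_nonneg hA.inv.posSemidef.nonneg) hY (hB.inv_anti hBB')
  have hcross : (S * X * D * Y).trace = (D * X * S * Y).trace :=
    trace_mul_mul_mul_comm hS hD hX.posSemidef.isHermitian hY.posSemidef.isHermitian
  have hexpand : invGap A' B' = (S * X * S * Y).trace + 2 * (D * X * S * Y).trace
      + (D * X * D * Y).trace :=
    calc invGap A' B' = ((S + D) * X * (S + D) * Y).trace := by rw [invGap_eq hA' hB', hdiff]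
      _ = _ := by
        simp only [add_mul, mul_add, trace_add]
        rw [hcross]
        ring
  have hterm : (D * (X - Y)).trace = (D * X * S * Y).trace + (D * X * D * Y).trace := by
    rw [show X - Y = X * (S + D) * Y from hdiff ▸ inv_sub_inv_eq hA'.isUnit hB'.isUnit]
    simp only [mul_add, add_mul, Matrix.mul_assoc, trace_add]
  have hDD := trace_mul_mul_mul_self_nonneg hD hX hY
  linarith

end Matrix

section SummationByParts

variable {R : Type*} [CommRing R] [LinearOrder R] [IsStrictOrderedRing R]

theorem sum_mul_nonneg_of_antitoneOn {r g t : ℕ → R} {K : ℕ} (hr : AntitoneOn r (Set.Icc 1 K))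
    (hrK : 0 ≤ r K) (hg0 : g 0 = 0) (hg : ∀ k ∈ Icc 1 K, 0 ≤ g k)
    (ht : ∀ k ∈ Icc 1 K, g k - g (k - 1) ≤ t k) : 0 ≤ ∑ k ∈ Icc 1 K, r k * t k := by
  have hr_nonneg : ∀ k ∈ Icc 1 K, 0 ≤ r k := fun k hk => by
    obtain ⟨h1, h2⟩ := mem_Icc.1 hk
    exact hrK.trans (hr ⟨h1, h2⟩ ⟨h1.trans h2, le_rfl⟩ h2)
  have hg_nonneg : ∀ j ≤ K, 0 ≤ g j := by
    rintro (_ | j) hj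
    · exact hg0.ge
    · exact hg _ (mem_Icc.2 ⟨j.succ_pos, hj⟩)
  have hpartial : ∀ j ≤ K, r j * g j ≤ ∑ k ∈ Icc 1 j, r k * t k := by
    intro j
    induction j with
    | zero => simp [hg0]
    | succ j ih =>
      intro hj
      have hmem : j + 1 ∈ Icc 1 K := mem_Icc.2 ⟨j.succ_pos, hj⟩
      have hstep := mul_le_mul_of_nonneg_left (ht _ hmem) (hr_nonneg _ hmem)
      have hdrop : 0 ≤ (r j - r (j + 1)) * g j := by
        rcases j.eq_zero_or_pos with rfl | hj0
        · simp [hg0]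
        · exact mul_nonneg (sub_nonneg.2 (hr ⟨hj0, by omega⟩ ⟨by omega, hj⟩ j.le_succ))
            (hg_nonneg j (by omega))
      rw [sum_Icc_succ_top (by omega)]
      simp only [Nat.add_sub_cancel] at hstep
      linarith [ih (by omega)]
  exact (mul_nonneg hrK (hg_nonneg K le_rfl)).trans (hpartial K le_rfl)

end SummationByParts

section TotalCovariance

variable {α : Type*}

/-- The covariance at receiver `k` of the ADBC: noise plus the signals of users `1, …, k`. -/
def totalCov [AddCommMonoid α] (N Q : ℕ → α) (k : ℕ) : α := N k + ∑ i ∈ Icc 1 k, Q i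

theorem totalCov_zero [AddCommMonoid α] (N Q : ℕ → α) : totalCov N Q 0 = N 0 := by
  simp [totalCov]

theorem totalCov_le_succ [AddCommMonoid α] [PartialOrder α] [IsOrderedAddMonoid α]
    {N Q : ℕ → α} {k : ℕ} (hN : N k ≤ N (k + 1)) (hQ : 0 ≤ Q (k + 1)) :
    totalCov N Q k ≤ totalCov N Q (k + 1) := by
  rw [totalCov, totalCov, sum_Icc_succ_top k.succ_pos]
  exact add_le_add hN (le_add_of_nonneg_right hQ)

theorem totalCov_sub_totalCov_succ [AddCommGroup α] (N P Q : ℕ → α) (k : ℕ) :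
    totalCov N P (k + 1) - totalCov N Q (k + 1)
      = totalCov N P k - totalCov N Q k + (P (k + 1) - Q (k + 1)) := by
  simp only [totalCov, sum_Icc_succ_top k.succ_pos]
  abel

end TotalCovariance

section ADBC

variable {m : Type*} {N Qt Qh Q : ℕ → Matrix m m ℝ} {K k : ℕ}

theorem posDef_totalCov (hN : ∀ k ∈ Icc 1 K, (N k).PosDef) (hQ : ∀ k ∈ Icc 1 K, 0 ≤ Q k)
    (hk : k ∈ Icc 1 K) : (totalCov N Q k).PosDef :=
  (hN k hk).add_posSemidef (sum_nonneg fun i hi =>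
    hQ i (mem_Icc.2 ⟨(mem_Icc.1 hi).1, (mem_Icc.1 hi).2.trans (mem_Icc.1 hk).2⟩)).posSemidef

variable [Fintype m] [DecidableEq m]

theorem invGap_totalCov_sub_le (hN : ∀ k ∈ Icc 1 K, (N k).PosDef)
    (hNmono : MonotoneOn N (Set.Icc 1 K)) (hQt : ∀ k ∈ Icc 1 K, 0 ≤ Qt k)
    (hQh : ∀ k ∈ Icc 1 K, 0 ≤ Qh k) (hk : k ∈ Icc 1 K) :
    invGap (totalCov N Qt k) (totalCov N Qh k)
        - invGap (totalCov N Qt (k - 1)) (totalCov N Qh (k - 1))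
      ≤ 2 * ((Qh k - Qt k) * ((totalCov N Qt k)⁻¹ - (totalCov N Qh k)⁻¹)).trace := by
  obtain ⟨hk1, hkK⟩ := mem_Icc.1 hk
  rcases hk1.eq_or_lt with rfl | hk2
  · have hS : totalCov N Qh 1 - totalCov N Qt 1 = Qh 1 - Qt 1 := by
      simpa [totalCov_zero] using totalCov_sub_totalCov_succ N Qh Qt 0
    have h1 := invGap_nonneg (posDef_totalCov hN hQt hk) (posDef_totalCov hN hQh hk)
    rw [Nat.sub_self, totalCov_zero, totalCov_zero, invGap_self, sub_zero]
    rw [invGap, hS] at h1 ⊢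
    linarith
  · obtain ⟨j, rfl⟩ : ∃ j, k = j + 1 := ⟨k - 1, by omega⟩
    have hjmem : j ∈ Icc 1 K := mem_Icc.2 ⟨by omega, by omega⟩
    have hNj : N j ≤ N (j + 1) := hNmono (coe_Icc 1 K ▸ hjmem) (coe_Icc 1 K ▸ hk) j.le_succ
    rw [Nat.add_sub_cancel]
    exact invGap_sub_invGap_le (posDef_totalCov hN hQt hjmem) (posDef_totalCov hN hQh hjmem)
      (totalCov_le_succ hNj (hQt _ hk)) (totalCov_le_succ hNj (hQh _ hk))
      ((hQh _ hk).posSemidef.isHermitian.sub (hQt _ hk).posSemidef.isHermitian)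
      (totalCov_sub_totalCov_succ N Qh Qt j)

end ADBC

theorem adbc_dsc_nonneg_general (n K : ℕ)
    (N Qt Qh : ℕ → Matrix (Fin n) (Fin n) ℝ)
    (hN1 : (N 1).PosDef)
    (hdeg : ∀ k ∈ Finset.Icc 2 K, (N k - N (k - 1)).PosSemidef)
    (hQt : ∀ k ∈ Finset.Icc 1 K, (Qt k).PosSemidef)
    (hQh : ∀ k ∈ Finset.Icc 1 K, (Qh k).PosSemidef)
    (r : ℕ → ℝ)
    (hrmono : ∀ k ∈ Finset.Icc 1 (K - 1), r (k + 1) ≤ r k)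
    (hrK : 0 < r K) :
    0 ≤ Matrix.trace (∑ k ∈ Finset.Icc 1 K,
      r k • ((Qh k - Qt k) *
        ((N k + ∑ i ∈ Finset.Icc 1 k, Qt i)⁻¹ -
         (N k + ∑ i ∈ Finset.Icc 1 k, Qh i)⁻¹))) := by
  have hNmono : MonotoneOn N (Set.Icc 1 K) :=
    monotoneOn_of_le_add_one Set.ordConnected_Icc fun k _ hk hk' =>
      le_iff.2 (by simpa using hdeg (k + 1) (mem_Icc.2 ⟨Nat.succ_le_succ hk.1, hk'.2⟩))
  have hr : AntitoneOn r (Set.Icc 1 K) :=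
    antitoneOn_of_add_one_le Set.ordConnected_Icc fun k _ hk hk' =>
      hrmono k (mem_Icc.2 ⟨hk.1, Nat.le_sub_one_of_lt hk'.2⟩)
  have hN : ∀ k ∈ Icc 1 K, (N k).PosDef := fun k hk => by
    obtain ⟨h1, h2⟩ := mem_Icc.1 hk
    exact hN1.of_le (hNmono ⟨le_rfl, h1.trans h2⟩ ⟨h1, h2⟩ h1)
  have hQt' : ∀ k ∈ Icc 1 K, 0 ≤ Qt k := fun k hk => (hQt k hk).nonneg
  have hQh' : ∀ k ∈ Icc 1 K, 0 ≤ Qh k := fun k hk => (hQh k hk).nonneg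
  have key := sum_mul_nonneg_of_antitoneOn hr hrK.le (by simp [totalCov_zero])
    (fun k hk => invGap_nonneg (posDef_totalCov hN hQt' hk) (posDef_totalCov hN hQh' hk))
    (fun k hk => invGap_totalCov_sub_le hN hNmono hQt' hQh' hk)
  simp only [mul_left_comm (r _) (2 : ℝ), ← mul_sum] at key
  rw [trace_sum]
  simp only [trace_smul, smul_eq_mul]
  exact (mul_nonneg_iff_of_pos_left two_pos).1 key

/-- DSC quantity of the ADBC game is nonnegative for ordered weights
`r₁ ≥ r₂ ≥ … ≥ r_K > 0`. -/
theorem adbc_dsc_nonneg (n K : ℕ) (hK : 0 < K)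
    (N Qt Qh : ℕ → Matrix (Fin n) (Fin n) ℝ)
    (hNsymm : ∀ k ∈ Finset.Icc 1 K, (N k).IsSymm)
    (hN1 : (N 1).PosDef)
    (hdeg : ∀ k ∈ Finset.Icc 2 K, (N k - N (k - 1)).PosSemidef)
    (hQt : ∀ k ∈ Finset.Icc 1 K, (Qt k).PosSemidef)
    (hQh : ∀ k ∈ Finset.Icc 1 K, (Qh k).PosSemidef)
    (r : ℕ → ℝ)
    (hrmono : ∀ k ∈ Finset.Icc 1 (K - 1), r (k + 1) ≤ r k)
    (hrK : 0 < r K) :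
    0 ≤ Matrix.trace (∑ k ∈ Finset.Icc 1 K,
      r k • ((Qh k - Qt k) *
        ((N k + ∑ i ∈ Finset.Icc 1 k, Qt i)⁻¹ -
         (N k + ∑ i ∈ Finset.Icc 1 k, Qh i)⁻¹))) :=
  adbc_dsc_nonneg_general n K N Qt Qh hN1 hdeg hQt hQh r hrmono hrK
end

section
/- Let N_1, N_2 be n×n real symmetric matrices with N_1 positive definite and N_2 − N_1 positive semidefinite, and let Q̃_1, Q̃_2, Q̂_1, Q̂_2 be n×n real positive semidefinite matrices. If r_1 and r_2 are real numbers with r_1 ≥ r_2/4 > 0, then Tr[ r_1 (Q̂_1 − Q̃_1)( (N_1 + Q̃_1)^{−1} − (N_1 + Q̂_1)^{−1} ) + r_2 (Q̂_2 − Q̃_2)( (N_2 + Q̃_1 + Q̃_2)^{−1} − (N_2 + Q̂_1 + Q̂_2)^{−1} ) ] ≥ 0. -/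
/-! With `A = N₁ + Q̃₁`, `B = N₁ + Q̂₁`, `C = N₂ + Q̃₁ + Q̃₂`, `E = N₂ + Q̂₁ + Q̂₂`, `D = B - A` and
`F = E - C`, the resolvent identity turns the differences of inverses into `A⁻¹ D B⁻¹` and
`C⁻¹ F E⁻¹`, so the quantity is `r₁ p + r₂ tr((F - D) C⁻¹ F E⁻¹)` with `p = tr(D A⁻¹ D B⁻¹) ≥ 0`.
Completing the square in the symmetric form `(X, Y) ↦ tr(X C⁻¹ Y E⁻¹)`, which is nonnegative on
the diagonal, bounds the second trace below by `-q / 4` with `q = tr(D C⁻¹ D E⁻¹)`, and `q ≤ p`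
because `A ≤ C` and `B ≤ E` give `C⁻¹ ≤ A⁻¹` and `E⁻¹ ≤ B⁻¹`. Hence the quantity is at least
`(r₁ - r₂ / 4) p ≥ 0`. -/

open Matrix
open scoped MatrixOrder ComplexOrder

namespace Matrix

variable {ι : Type*} [Fintype ι]

theorem PosDef.inv_le_inv_s6 {𝕜 : Type*} [RCLike 𝕜] [DecidableEq ι] {A C : Matrix ι ι 𝕜}
    (hA : A.PosDef) (hAC : A ≤ C) : C⁻¹ ≤ A⁻¹ := by
  have hC : C.PosDef := add_sub_cancel A C ▸ hA.add_posSemidef hAC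
  have hAu := (isUnit_iff_isUnit_det A).mp hA.isUnit
  have hCu := (isUnit_iff_isUnit_det C).mp hC.isUnit
  have hAh : A⁻¹ᴴ = A⁻¹ := hA.inv.isHermitian
  have hCh : C⁻¹ᴴ = C⁻¹ := hC.inv.isHermitian
  have key : A⁻¹ - C⁻¹ =
      (A⁻¹ - C⁻¹) * A * (A⁻¹ - C⁻¹)ᴴ + C⁻¹ * (C - A) * C⁻¹ᴴ := by
    rw [conjTranspose_sub, hAh, hCh]
    simp only [Matrix.sub_mul, Matrix.mul_sub, Matrix.mul_assoc, mul_nonsing_inv _ hAu,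
      mul_nonsing_inv _ hCu, nonsing_inv_mul_cancel_left _ _ hAu, Matrix.mul_one]
    abel
  rw [Matrix.le_iff, key]
  exact (hA.posSemidef.mul_mul_conjTranspose_same _).add (hAC.mul_mul_conjTranspose_same _)

theorem trace_mul_mul_mul_nonneg_s6 {D P Q : Matrix ι ι ℝ} (hD : D.IsHermitian)
    (hP : P.PosSemidef) (hQ : Q.PosSemidef) : 0 ≤ (D * P * D * Q).trace := by
  classical
  obtain ⟨S, rfl⟩ := CStarAlgebra.nonneg_iff_eq_star_mul_self.mp hP.nonneg
  obtain ⟨T, rfl⟩ := CStarAlgebra.nonneg_iff_eq_star_mul_self.mp hQ.nonneg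
  have hsq :
      (D * (star S * S) * D * (star T * T)).trace = ((S * D * Tᴴ)ᴴ * (S * D * Tᴴ)).trace := by
    rw [trace_mul_comm]
    simp only [conjTranspose_mul, hD.eq, conjTranspose_conjTranspose, star_eq_conjTranspose,
      Matrix.mul_assoc]
    rw [trace_mul_comm]; simp only [Matrix.mul_assoc]
  rw [hsq]
  exact (posSemidef_conjTranspose_mul_self _).trace_nonneg

theorem trace_mul_mul_mul_comm_s6 {X Y P Q : Matrix ι ι ℝ} (hX : X.IsHermitian)
    (hY : Y.IsHermitian) (hP : P.IsHermitian) (hQ : Q.IsHermitian) :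
    (X * P * Y * Q).trace = (Y * P * X * Q).trace := by
  rw [← star_trivial (X * P * Y * Q).trace, ← trace_conjTranspose]
  simp only [conjTranspose_mul, hX.eq, hY.eq, hP.eq, hQ.eq]
  rw [trace_mul_comm]
  simp only [Matrix.mul_assoc]

theorem trace_mul_mul_mul_le_of_le {D P P' Q Q' : Matrix ι ι ℝ} (hD : D.IsHermitian)
    (hP : P.PosSemidef) (hQ' : Q'.PosSemidef) (hPP' : P ≤ P') (hQQ' : Q ≤ Q') :
    (D * P * D * Q).trace ≤ (D * P' * D * Q').trace := by
  have h₁ := trace_mul_mul_mul_nonneg_s6 hD hPP' hQ'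
  have h₂ := trace_mul_mul_mul_nonneg_s6 hD hP hQQ'
  simp only [Matrix.mul_sub, Matrix.sub_mul, trace_sub] at h₁ h₂
  linarith

theorem neg_trace_div_four_le_trace_sub_mul_mul_mul {D F P Q : Matrix ι ι ℝ}
    (hD : D.IsHermitian) (hF : F.IsHermitian) (hP : P.PosSemidef) (hQ : Q.PosSemidef) :
    -(D * P * D * Q).trace / 4 ≤ ((F - D) * P * F * Q).trace := by
  have hsq := trace_mul_mul_mul_nonneg_s6 (hF.sub (hD.smul (IsSelfAdjoint.all (1 / 2 : ℝ)))) hP hQ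
  have hswap := trace_mul_mul_mul_comm_s6 hD hF hP.isHermitian hQ.isHermitian
  simp only [Matrix.sub_mul, Matrix.mul_sub, smul_mul_assoc, mul_smul_comm, trace_sub,
    trace_smul, smul_eq_mul] at hsq ⊢
  linarith

end Matrix

theorem trace_dsc_nonneg {ι : Type*} [Fintype ι] [DecidableEq ι] {A B C E : Matrix ι ι ℝ}
    (hA : A.PosDef) (hB : B.PosDef) (hAC : A ≤ C) (hBE : B ≤ E) {r₁ r₂ : ℝ}
    (hr : r₂ / 4 ≤ r₁) (hr₂ : 0 ≤ r₂) :
    0 ≤ (r₁ • ((B - A) * (A⁻¹ - B⁻¹)) + r₂ • ((E - C - (B - A)) * (C⁻¹ - E⁻¹))).trace := by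
  have hC : C.PosDef := add_sub_cancel A C ▸ hA.add_posSemidef hAC
  have hE : E.PosDef := add_sub_cancel B E ▸ hB.add_posSemidef hBE
  have hD : (B - A).IsHermitian := hB.isHermitian.sub hA.isHermitian
  have hF : (E - C).IsHermitian := hE.isHermitian.sub hC.isHermitian
  rw [inv_sub_inv (iff_of_true hA.isUnit hB.isUnit),
    inv_sub_inv (iff_of_true hC.isUnit hE.isUnit)]
  set D := B - A
  set F := E - C
  have hp : 0 ≤ (D * A⁻¹ * D * B⁻¹).trace :=
    trace_mul_mul_mul_nonneg_s6 hD hA.inv.posSemidef hB.inv.posSemidef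
  have hqp : (D * C⁻¹ * D * E⁻¹).trace ≤ (D * A⁻¹ * D * B⁻¹).trace :=
    trace_mul_mul_mul_le_of_le hD hC.inv.posSemidef hB.inv.posSemidef
      (hA.inv_le_inv_s6 hAC) (hB.inv_le_inv_s6 hBE)
  have hq :=
    neg_trace_div_four_le_trace_sub_mul_mul_mul hD hF hC.inv.posSemidef hE.inv.posSemidef
  simp only [trace_add, trace_smul, smul_eq_mul, ← Matrix.mul_assoc] at hq ⊢
  nlinarith [mul_nonneg (sub_nonneg.mpr hr) hp, mul_nonneg hr₂ (sub_nonneg.mpr hqp)]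

theorem adbc_two_user_dsc_nonneg_general (n : ℕ)
    (N1 N2 Qt1 Qt2 Qh1 Qh2 : Matrix (Fin n) (Fin n) ℝ)
    (hN1 : N1.PosDef) (hdeg : (N2 - N1).PosSemidef)
    (hQt1 : Qt1.PosSemidef) (hQt2 : Qt2.PosSemidef)
    (hQh1 : Qh1.PosSemidef) (hQh2 : Qh2.PosSemidef)
    (r1 r2 : ℝ) (hr1 : r2 / 4 ≤ r1) (hr2 : 0 < r2 / 4) :
    0 ≤ Matrix.trace
      (r1 • ((Qh1 - Qt1) * ((N1 + Qt1)⁻¹ - (N1 + Qh1)⁻¹)) +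
       r2 • ((Qh2 - Qt2) * ((N2 + Qt1 + Qt2)⁻¹ - (N2 + Qh1 + Qh2)⁻¹))) := by
  have hAC : N1 + Qt1 ≤ N2 + Qt1 + Qt2 := by
    rw [le_iff, show N2 + Qt1 + Qt2 - (N1 + Qt1) = N2 - N1 + Qt2 by abel]
    exact hdeg.add hQt2
  have hBE : N1 + Qh1 ≤ N2 + Qh1 + Qh2 := by
    rw [le_iff, show N2 + Qh1 + Qh2 - (N1 + Qh1) = N2 - N1 + Qh2 by abel]
    exact hdeg.add hQh2
  have h := trace_dsc_nonneg (hN1.add_posSemidef hQt1) (hN1.add_posSemidef hQh1) hAC hBE hr1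
    (by linarith)
  have hD : N1 + Qh1 - (N1 + Qt1) = Qh1 - Qt1 := by abel
  have hF : N2 + Qh1 + Qh2 - (N2 + Qt1 + Qt2) - (Qh1 - Qt1) = Qh2 - Qt2 := by abel
  rwa [hD, hF] at h

/-- DSC quantity of the 2-user ADBC game is nonnegative for weights
`r₁ ≥ r₂/4 > 0`. -/
theorem adbc_two_user_dsc_nonneg (n : ℕ)
    (N1 N2 Qt1 Qt2 Qh1 Qh2 : Matrix (Fin n) (Fin n) ℝ)
    (hN2symm : N2.IsSymm)
    (hN1 : N1.PosDef) (hdeg : (N2 - N1).PosSemidef)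
    (hQt1 : Qt1.PosSemidef) (hQt2 : Qt2.PosSemidef)
    (hQh1 : Qh1.PosSemidef) (hQh2 : Qh2.PosSemidef)
    (r1 r2 : ℝ) (hr1 : r2 / 4 ≤ r1) (hr2 : 0 < r2 / 4) :
    0 ≤ Matrix.trace
      (r1 • ((Qh1 - Qt1) * ((N1 + Qt1)⁻¹ - (N1 + Qh1)⁻¹)) +
       r2 • ((Qh2 - Qt2) * ((N2 + Qt1 + Qt2)⁻¹ - (N2 + Qh1 + Qh2)⁻¹))) :=
  adbc_two_user_dsc_nonneg_general n N1 N2 Qt1 Qt2 Qh1 Qh2 hN1 hdeg hQt1 hQt2 hQh1 hQh2 r1 r2 hr1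
    hr2
end
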